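/- For every integer m ≥ 1, the polynomial [F_{m+1}]_q · [F_{m+2}]_q (which equals the q-Fibonomial coefficient binom_F(m+2, 2)_q) has degree F_{m+3} − 2, and its coefficient a_k of q^k equals: k + 1 for 0 ≤ k ≤ F_{m+1} − 1; F_{m+1} for F_{m+1} ≤ k ≤ F_{m+2} − 2; and F_{m+3} − k − 1 for F_{m+2} − 1 ≤ k ≤ F_{m+3} − 2. -/
import Mathlib


open Polynomial

/-- The q-analog `[n]_q = 1 + q + ⋯ + q^(n-1)` as a polynomial in `ℤ[q]`. -/
noncomputable def qAnalog (n : ℕ) : Polynomial ℤ :=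
  ∑ i ∈ Finset.range n, X ^ i

/-- The q-analog `[n]_{q^r} = 1 + q^r + ⋯ + q^(r(n-1))` as a polynomial in `ℤ[q]`. -/
noncomputable def qAnalogPow (n r : ℕ) : Polynomial ℤ :=
  ∑ i ∈ Finset.range n, X ^ (r * i)

/-- A polynomial of degree `d` is symmetric if `c_k = c_{d-k}` for all `0 ≤ k ≤ d`. -/
def IsSymmPoly (P : Polynomial ℤ) : Prop :=
  ∀ k ≤ P.natDegree, P.coeff k = P.coeff (P.natDegree - k)

/-- A polynomial is unimodal if its coefficient sequence increases up to some
index `M` and decreases afterwards. -/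
def IsUnimodalPoly (P : Polynomial ℤ) : Prop :=
  ∃ M : ℕ, (∀ k, k < M → P.coeff k ≤ P.coeff (k + 1)) ∧
    (∀ k, M ≤ k → P.coeff (k + 1) ≤ P.coeff k)

lemma coeff_qAnalog (n k : ℕ) : (qAnalog n).coeff k = if k < n then 1 else 0 := by
  simp [qAnalog, Polynomial.coeff_X_pow, Finset.sum_ite_eq]

lemma qAnalog_ne_zero {n : ℕ} (hn : 1 ≤ n) : qAnalog n ≠ 0 := by
  intro h
  have := coeff_qAnalog n 0
  rw [h] at this
  simp [hn] at this
  omega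

lemma natDegree_qAnalog (n : ℕ) (hn : 1 ≤ n) : (qAnalog n).natDegree = n - 1 := by
  apply le_antisymm
  · apply Polynomial.natDegree_sum_le_of_forall_le
    intro i hi
    simp only [Finset.mem_range] at hi
    rw [Polynomial.natDegree_X_pow]
    omega
  · apply Polynomial.le_natDegree_of_ne_zero
    rw [coeff_qAnalog]
    simp only [if_pos (by omega : n - 1 < n)]
    norm_num

lemma coeff_mul_qAnalog (a b k : ℕ) :
    (qAnalog a * qAnalog b).coeff k = ((min a (k+1) - (k+1-b) : ℕ) : ℤ) := by
  rw [Polynomial.coeff_mul, Finset.Nat.sum_antidiagonal_eq_sum_range_succ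
    (f := fun i j => (qAnalog a).coeff i * (qAnalog b).coeff j)]
  simp only [coeff_qAnalog, ite_mul, one_mul, zero_mul]
  have : ∀ i ∈ Finset.range (k+1),
      (if i < a then if k - i < b then (1:ℤ) else 0 else 0)
      = if i ∈ Finset.Ico (k+1-b) (min a (k+1)) then 1 else 0 := by
    intro i hi
    simp only [Finset.mem_range] at hi
    simp only [Finset.mem_Ico]
    split_ifs with h3 h4 h5 h5 <;> omega
  rw [Finset.sum_congr rfl this, Finset.sum_ite_mem, Finset.inter_comm,
    Finset.sum_const]
  have : Finset.Ico (k+1-b) (min a (k+1)) ∩ Finset.range (k+1)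
      = Finset.Ico (k+1-b) (min a (k+1)) := by
    apply Finset.inter_eq_left.mpr
    intro i hi
    simp only [Finset.mem_Ico] at hi
    simp only [Finset.mem_range]; omega
  rw [this, Nat.card_Ico]
  simp

theorem qFibonomial_two_coeffs (m : ℕ) (hm : 1 ≤ m) :
    (qAnalog (Nat.fib (m + 1)) * qAnalog (Nat.fib (m + 2))).natDegree
      = Nat.fib (m + 3) - 2 ∧
    (∀ k : ℕ, k ≤ Nat.fib (m + 1) - 1 →
      (qAnalog (Nat.fib (m + 1)) * qAnalog (Nat.fib (m + 2))).coeff k = (k : ℤ) + 1) ∧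
    (∀ k : ℕ, Nat.fib (m + 1) ≤ k → k ≤ Nat.fib (m + 2) - 2 →
      (qAnalog (Nat.fib (m + 1)) * qAnalog (Nat.fib (m + 2))).coeff k
        = (Nat.fib (m + 1) : ℤ)) ∧
    (∀ k : ℕ, Nat.fib (m + 2) - 1 ≤ k → k ≤ Nat.fib (m + 3) - 2 →
      (qAnalog (Nat.fib (m + 1)) * qAnalog (Nat.fib (m + 2))).coeff k
        = (Nat.fib (m + 3) : ℤ) - (k : ℤ) - 1) := by
  set a := Nat.fib (m + 1) with ha
  set b := Nat.fib (m + 2) with hb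
  have ha1 : 1 ≤ a := Nat.fib_pos.mpr (by omega)
  have hab : a ≤ b := Nat.fib_le_fib_succ
  have hsum : Nat.fib (m + 3) = a + b := by
    rw [ha, hb]; exact Nat.fib_add_two
  refine ⟨?_, ?_, ?_, ?_⟩
  · rw [Polynomial.natDegree_mul (qAnalog_ne_zero ha1) (qAnalog_ne_zero (by omega)),
      natDegree_qAnalog a ha1, natDegree_qAnalog b (by omega)]
    omega
  · intro k hk
    rw [coeff_mul_qAnalog]
    omega
  · intro k hk1 hk2
    rw [coeff_mul_qAnalog]
    omega
  · intro k hk1 hk2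
    rw [coeff_mul_qAnalog]
    omega
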